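/- Let θ and κ be multi-indices and for a multi-index α and x : ℕ → ℝ set Ξ_α(x) = ∏_k He_{α_k}(x_k)/√(α_k!) (a finite product). Then for every x : ℕ → ℝ one has Ξ_θ(x)·Ξ_κ(x) = ∑_{p} [√(θ!·κ!·(θ+κ−2p)!)/(p!·(θ−p)!·(κ−p)!)]·Ξ_{θ+κ−2p}(x), where the (finite) sum is over all multi-indices p with p_k ≤ min(θ_k, κ_k) for all k. (This is the coefficient form of the paper's Proposition expressing the ordinary product of two Cameron–Martin basis elements ξ_θ·ξ_κ as ∑_{n≥0} (D^n ξ_θ ◊ D^n ξ_κ)/n!, where D is the Malliavin derivative and ◊ the Wick product.) -/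

import Mathlib

/-- The factorial `α! = ∏_k (α_k)!` of a multi-index. -/
def mfact (α : ℕ →₀ ℕ) : ℕ := α.prod fun _ n => n.factorial

/-- The Cameron–Martin type normalized Hermite product
`Ξ_α(x) = ∏_k He_{α_k}(x_k)/√(α_k!)` (a finite product). -/
noncomputable def hermiteXi (α : ℕ →₀ ℕ) (x : ℕ → ℝ) : ℝ :=
  α.prod fun k n => Polynomial.aeval (x k) (Polynomial.hermite n) / Real.sqrt (n.factorial)

/-!
In one variable, `He_m He_n = ∑_j C(m,j) C(n,j) j! He_{m+n-2j}` by induction on `n`: since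
`He_{n+1} = (X - D) He_n`, the product rule gives
`He_m He_{n+1} = (X - D)(He_m He_n) + m He_{m-1} He_n`, and `X - D` sends `He_k` to `He_{k+1}`;
the coefficients then obey `c(m+1, n+1, j+1) = c(m+1, n, j+1) + (m+1) c(m, n, j)`.
Dividing by `√(m! n!)` gives the formula for `ξ_n = He_n / √n!`. As `Ξ_α` is the product of
the `ξ_{α_k}(x_k)`, the multi-index formula is the product of the one-variable ones, expanded
by distributivity into a sum over the `p` with `p_k ≤ min(θ_k, κ_k)`.
-/

open Polynomial Finset
open scoped Nat

theorem Nat.choose_mul_choose_eq_zero_or_le (m n j : ℕ) :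
    m.choose j * n.choose j = 0 ∨ j ≤ m ∧ j ≤ n := by
  simp only [mul_eq_zero, Nat.choose_eq_zero_iff]
  omega

theorem Nat.choose_succ_mul_choose_succ_mul_factorial (m n j : ℕ) :
    (m + 1).choose (j + 1) * (n + 1).choose (j + 1) * (j + 1)! =
      (m + 1).choose (j + 1) * n.choose (j + 1) * (j + 1)! +
        (m + 1) * (m.choose j * n.choose j * j !) := by
  have h := Nat.add_one_mul_choose_eq m j
  rw [Nat.choose_succ_succ' n, Nat.factorial_succ]
  linear_combination (n.choose j * j !) * h.symm

theorem Nat.choose_mul_choose_mul_factorial_mul {m n j : ℕ} (hm : j ≤ m) (hn : j ≤ n) :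
    m.choose j * n.choose j * j ! * (j ! * (m - j)! * (n - j)!) = m ! * n ! := by
  rw [← Nat.choose_mul_factorial_mul_factorial hm, ← Nat.choose_mul_factorial_mul_factorial hn]
  ring

theorem Finset.prod_sum_finsupp {ι α R : Type*} [Zero α] [CommSemiring R] (s : Finset ι)
    (t : ι → Finset α) (f : ι → α → R) :
    ∏ i ∈ s, ∑ a ∈ t i, f i a = ∑ p ∈ s.finsupp t, ∏ i ∈ s, f i (p i) := by
  classical
  rw [prod_sum, Finset.finsupp, sum_map]
  refine sum_congr rfl fun g _ => ?_
  rw [← prod_attach s]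
  refine prod_congr rfl fun i _ => ?_
  simp only [Function.Embedding.coeFn_mk, Finsupp.indicator_apply, SetLike.coe_mem, dite_true]

theorem Finsupp.support_add_tsub_subset {ι : Type*} [DecidableEq ι] (f g h : ι →₀ ℕ) :
    (f + g - h).support ⊆ f.support ∪ g.support :=
  Finsupp.support_tsub.trans Finsupp.support_add

namespace Polynomial

theorem derivative_hermite_succ (n : ℕ) :
    derivative (hermite (n + 1)) = (n + 1 : ℕ) • hermite n := by
  induction n with
  | zero => simp
  | succ n ih =>
    rw [hermite_succ (n + 1), derivative_sub, derivative_mul, derivative_X, ih,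
      derivative_smul, mul_smul_comm, add_sub_assoc, ← smul_sub, ← hermite_succ, one_mul,
      ← succ_nsmul']

theorem hermite_mul_hermite_succ (m n : ℕ) :
    hermite m * hermite (n + 1) =
      X * (hermite m * hermite n) - derivative (hermite m * hermite n) +
        derivative (hermite m) * hermite n := by
  rw [hermite_succ, derivative_mul]
  ring

theorem X_mul_sub_derivative_sum_hermite {ι : Type*} (s : Finset ι) (c k : ι → ℕ) :
    X * (∑ i ∈ s, c i • hermite (k i)) - derivative (∑ i ∈ s, c i • hermite (k i)) =
      ∑ i ∈ s, c i • hermite (k i + 1) := by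
  rw [mul_sum, derivative_sum, ← sum_sub_distrib]
  refine sum_congr rfl fun i _ => ?_
  rw [derivative_smul, mul_smul_comm, ← smul_sub, hermite_succ]

theorem hermite_mul_hermite (m n : ℕ) :
    hermite m * hermite n =
      ∑ j ∈ range (n + 1), (m.choose j * n.choose j * j !) • hermite (m + n - 2 * j) := by
  induction n generalizing m with
  | zero => simp
  | succ n ih =>
    rw [hermite_mul_hermite_succ, ih m, X_mul_sub_derivative_sum_hermite]
    cases m with
    | zero => simp [sum_range_succ', hermite_zero]
    | succ m =>
      have h_raise : ∑ j ∈ range (n + 1),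
            ((m + 1).choose j * n.choose j * j !) • hermite (m + 1 + n - 2 * j + 1) =
          ∑ j ∈ range (n + 1),
            ((m + 1).choose (j + 1) * n.choose (j + 1) * (j + 1)!) • hermite (m + n - 2 * j) +
          hermite (m + n + 2) := by
        rw [sum_range_succ', sum_range_succ _ n, Nat.choose_succ_self]
        simp only [mul_zero, zero_mul, zero_smul, add_zero]
        congr 1
        · refine sum_congr rfl fun j _ => ?_
          rcases Nat.choose_mul_choose_eq_zero_or_le (m + 1) n (j + 1) with h | ⟨hm, hn⟩
          · simp [h]
          · congr 2
            omega
        · simp only [Nat.choose_zero_right, mul_one, Nat.factorial_zero, one_smul]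
          congr 1
          omega
      have h_lower : ∑ j ∈ range (n + 1), (m + 1) • ((m.choose j * n.choose j * j !) •
            hermite (m + n - 2 * j)) =
          ∑ j ∈ range (n + 1), ((m + 1) * (m.choose j * n.choose j * j !)) •
            hermite (m + n - 2 * j) :=
        sum_congr rfl fun j _ => smul_smul _ _ _
      rw [derivative_hermite_succ, smul_mul_assoc, ih m, smul_sum, h_raise, h_lower,
        sum_range_succ' _ (n + 1)]
      have h_index (j : ℕ) : m + 1 + (n + 1) - 2 * (j + 1) = m + n - 2 * j := by omega
      simp only [Nat.choose_succ_mul_choose_succ_mul_factorial, add_smul, sum_add_distrib, h_index,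
        Nat.choose_zero_right, Nat.factorial_zero, mul_one, one_smul]
      rw [show m + 1 + (n + 1) - 2 * 0 = m + n + 2 by omega]
      abel

end Polynomial

noncomputable def normHermite (n : ℕ) (t : ℝ) : ℝ :=
  aeval t (hermite n) / √(n ! : ℝ)

noncomputable def hermiteLinearizationCoeff (m n j : ℕ) : ℝ :=
  √((m ! : ℝ) * n ! * (m + n - 2 * j)!) / ((j ! : ℝ) * (m - j)! * (n - j)!)

theorem normHermite_zero (t : ℝ) : normHermite 0 t = 1 := by
  simp [normHermite]

theorem normHermite_mul (m n : ℕ) (t : ℝ) :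
    normHermite m t * normHermite n t =
      ∑ j ∈ range (min m n + 1),
        hermiteLinearizationCoeff m n j * normHermite (m + n - 2 * j) t := by
  have h_vanish : ∀ j ∈ range (n + 1), j ∉ range (min m n + 1) →
      aeval t ((m.choose j * n.choose j * j !) • hermite (m + n - 2 * j)) /
        (√(m ! : ℝ) * √(n ! : ℝ)) = 0 := by
    intro j hj hj'
    rw [Nat.choose_eq_zero_of_lt (by simp at hj hj'; omega)]
    simp
  rw [normHermite, normHermite, div_mul_div_comm, ← map_mul, hermite_mul_hermite, map_sum,
    sum_div, ← sum_subset (range_subset_range.2 (by omega)) h_vanish]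
  refine sum_congr rfl fun j hj => ?_
  have hm : j ≤ m := by simp at hj; omega
  have hn : j ≤ n := by simp at hj; omega
  have h_fact := congrArg (Nat.cast (R := ℝ)) (Nat.choose_mul_choose_mul_factorial_mul hm hn)
  push_cast at h_fact
  rw [map_nsmul, nsmul_eq_mul, hermiteLinearizationCoeff, normHermite,
    Real.sqrt_mul (by positivity), Real.sqrt_mul (by positivity)]
  field_simp
  rw [Real.sq_sqrt (by positivity), Real.sq_sqrt (by positivity)]
  push_cast
  linear_combination aeval t (hermite (m + n - 2 * j)) * h_fact

theorem mfact_eq_prod {α : ℕ →₀ ℕ} {S : Finset ℕ} (h : α.support ⊆ S) :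
    mfact α = ∏ k ∈ S, (α k)! :=
  Finsupp.prod_of_support_subset α h _ fun _ _ => rfl

theorem hermiteXi_eq_prod {α : ℕ →₀ ℕ} {S : Finset ℕ} (h : α.support ⊆ S) (x : ℕ → ℝ) :
    hermiteXi α x = ∏ k ∈ S, normHermite (α k) (x k) :=
  Finsupp.prod_of_support_subset α h _ fun k _ => normHermite_zero (x k)

theorem Finsupp.Iic_filter_le_eq_finsupp {θ κ : ℕ →₀ ℕ} {S : Finset ℕ}
    (hθ : θ.support ⊆ S) :
    (Iic θ).filter (· ≤ κ) = S.finsupp fun k => range (min (θ k) (κ k) + 1) := by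
  ext p
  simp only [mem_filter, mem_Iic, mem_finsupp_iff, mem_range, Nat.lt_succ_iff, le_min_iff,
    Finsupp.le_def, ← forall_and]
  refine ⟨fun h => ⟨(Finsupp.support_mono fun i => (h i).1).trans hθ, fun i _ => h i⟩,
    fun ⟨hpS, hp⟩ i => ?_⟩
  by_cases hi : i ∈ S
  · exact hp i hi
  · simp [Finsupp.notMem_support_iff.1 (mt (@hpS i) hi)]

theorem sqrt_mfact_div_mfact_eq_prod {θ κ p : ℕ →₀ ℕ} {S : Finset ℕ} (hθ : θ.support ⊆ S)
    (hκ : κ.support ⊆ S) (hp : p.support ⊆ S) :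
    √((mfact θ : ℝ) * mfact κ * mfact (θ + κ - 2 • p)) /
        ((mfact p : ℝ) * mfact (θ - p) * mfact (κ - p)) =
      ∏ k ∈ S, hermiteLinearizationCoeff (θ k) (κ k) (p k) := by
  have hsum : (θ + κ - 2 • p).support ⊆ S :=
    (Finsupp.support_add_tsub_subset θ κ (2 • p)).trans (union_subset hθ hκ)
  rw [mfact_eq_prod hθ, mfact_eq_prod hκ, mfact_eq_prod hsum, mfact_eq_prod hp,
    mfact_eq_prod (Finsupp.support_tsub.trans hθ), mfact_eq_prod (Finsupp.support_tsub.trans hκ)]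
  push_cast
  rw [← prod_mul_distrib, ← prod_mul_distrib, ← prod_mul_distrib, ← prod_mul_distrib,
    Real.sqrt_prod _ fun _ _ => by positivity, ← prod_div_distrib]
  rfl

/-- Product formula for normalized Hermite multi-index products:
`Ξ_θ·Ξ_κ = ∑_{p ≤ θ ⊓ κ} √(θ!κ!(θ+κ-2p)!)/(p!(θ-p)!(κ-p)!) · Ξ_{θ+κ-2p}`. -/
theorem hermiteXi_mul (θ κ : ℕ →₀ ℕ) (x : ℕ → ℝ) :
    hermiteXi θ x * hermiteXi κ x =
      ∑ p ∈ (Finset.Iic θ).filter (fun p => p ≤ κ),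
        (Real.sqrt ((mfact θ : ℝ) * (mfact κ : ℝ) * (mfact (θ + κ - 2 • p) : ℝ)) /
            ((mfact p : ℝ) * (mfact (θ - p) : ℝ) * (mfact (κ - p) : ℝ))) *
          hermiteXi (θ + κ - 2 • p) x := by
  set S := θ.support ∪ κ.support
  have hθ : θ.support ⊆ S := subset_union_left
  have hκ : κ.support ⊆ S := subset_union_right
  rw [hermiteXi_eq_prod hθ, hermiteXi_eq_prod hκ, ← prod_mul_distrib,
    prod_congr rfl fun k _ => normHermite_mul _ _ _, prod_sum_finsupp,
    ← Finsupp.Iic_filter_le_eq_finsupp hθ]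
  refine sum_congr rfl fun p hp => ?_
  have hpS : p.support ⊆ S := (Finsupp.support_mono (mem_Iic.1 (mem_filter.1 hp).1)).trans hθ
  have hsum : (θ + κ - 2 • p).support ⊆ S := Finsupp.support_add_tsub_subset θ κ (2 • p)
  rw [prod_mul_distrib, sqrt_mfact_div_mfact_eq_prod hθ hκ hpS, hermiteXi_eq_prod hsum]
  simp
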